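/- arXiv:2601.20403 — 4 statements merged into one kernel-verified Lean document; each statement's English description precedes it below -/
import Mathlib

section
/- Let n ≥ 1, k ≥ 1, C ≥ 0, and let c : Fin k × Fin n → R be such that for each i, ∑_{p=1}^{k} |c(p,i)| ≤ C. Then ∑_{p=1}^{k} ∏_{i=1}^{n} |c(p,i)|^{1/n} ≤ C. -/
theorem star_network_classical_bound (n k : ℕ) (hn : 1 ≤ n) (hk : 1 ≤ k)
    (C : ℝ) (hC : 0 ≤ C) (c : Fin k × Fin n → ℝ)
    (hbound : ∀ i : Fin n, ∑ p : Fin k, |c (p, i)| ≤ C) :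
    ∑ p : Fin k, ∏ i : Fin n, |c (p, i)| ^ ((1 : ℝ) / n) ≤ C := by
  have hn0 : (0:ℝ) < n := by exact_mod_cast hn
  have step : ∀ p : Fin k, ∏ i : Fin n, |c (p, i)| ^ ((1 : ℝ) / n)
      ≤ ∑ i : Fin n, ((1:ℝ)/n) * |c (p, i)| := by
    intro p
    apply Real.geom_mean_le_arith_mean_weighted
    · intro i _; positivity
    · rw [Finset.sum_const, Finset.card_univ, Fintype.card_fin, nsmul_eq_mul]
      field_simp
    · intro i _; exact abs_nonneg _
  calc ∑ p : Fin k, ∏ i : Fin n, |c (p, i)| ^ ((1 : ℝ) / n)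
      ≤ ∑ p : Fin k, ∑ i : Fin n, ((1:ℝ)/n) * |c (p, i)| :=
        Finset.sum_le_sum fun p _ => step p
    _ = ∑ i : Fin n, ((1:ℝ)/n) * ∑ p : Fin k, |c (p, i)| := by
        rw [Finset.sum_comm]; simp [Finset.mul_sum]
    _ ≤ ∑ i : Fin n, ((1:ℝ)/n) * C := by
        apply Finset.sum_le_sum
        intro i _
        exact mul_le_mul_of_nonneg_left (hbound i) (by positivity)
    _ = C := by
        rw [Finset.sum_const, Finset.card_univ, Fintype.card_fin, nsmul_eq_mul]
        field_simp
end

section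
/- There exists G ∈ (0,1) such that simultaneously 12G > 9, 4√3·√(G(1+2√(1−G²))) > 9, and 4(1+2√(1−G²)) > 9. For instance G = 0.76 works. -/
theorem sharing_226 :
    ∃ G ∈ Set.Ioo (0 : ℝ) 1,
      12 * G > 9 ∧
      4 * Real.sqrt 3 * Real.sqrt (G * (1 + 2 * Real.sqrt (1 - G ^ 2))) > 9 ∧
      4 * (1 + 2 * Real.sqrt (1 - G ^ 2)) > 9 := by
  have h1 : (1 : ℝ) - (0.76:ℝ) ^ 2 = 0.4224 := by norm_num
  have hs : (0.64 : ℝ) ≤ Real.sqrt 0.4224 := by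
    rw [show (0.64:ℝ) = Real.sqrt (0.64^2) from (Real.sqrt_sq (by norm_num)).symm]
    exact Real.sqrt_le_sqrt (by norm_num)
  refine ⟨0.76, ⟨by norm_num, by norm_num⟩, by norm_num, ?_, ?_⟩
  · rw [h1]
    set x := (0.76:ℝ) * (1 + 2 * Real.sqrt 0.4224) with hx
    have hxpos : (0:ℝ) ≤ x := by nlinarith
    have hxge : x ≥ 0.76 * 2.28 := by nlinarith
    have a : Real.sqrt 3 ^ 2 = 3 := Real.sq_sqrt (by norm_num)
    have b : Real.sqrt x ^ 2 = x := Real.sq_sqrt hxpos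
    have a0 : (0:ℝ) ≤ Real.sqrt 3 := Real.sqrt_nonneg _
    have b0 : (0:ℝ) ≤ Real.sqrt x := Real.sqrt_nonneg _
    nlinarith [sq_nonneg (Real.sqrt 3 * Real.sqrt x - 9/4),
      mul_nonneg a0 b0]
  · rw [h1]; nlinarith
end

section
/- The function f(k) = k·cos(π/(2k))/(k−1) is strictly decreasing for real k ≥ 2 (in particular, for integers k ≥ 2, f(k+1) < f(k)). -/
/-!
Substituting `φ = π/2 - π/(2k)` turns `cos (π/(2k))` into `sin φ` and `k/(k-1)` into `(π/2)/φ`,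
so the ratio equals `(π/2) · sinc φ`. As `k` runs over `(1, ∞)`, `φ` increases through `(0, π/2)`,
and `sinc` decreases on `[0, π]` because it is the slope of the chord of the concave function `sin`
from the origin.
-/

open Real Set

namespace Real

theorem sinc_strictAntiOn : StrictAntiOn sinc (Icc 0 π) := by
  intro x hx y hy hxy
  have hy0 : y ≠ 0 := (hx.1.trans_lt hxy).ne'
  rw [sinc_of_ne_zero hy0]
  rcases hx.1.eq_or_lt with rfl | hx0
  · rw [sinc_zero, div_lt_one (hx.1.trans_lt hxy)]
    exact sin_lt (hx.1.trans_lt hxy)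
  · rw [sinc_of_ne_zero hx0.ne']
    simpa using strictConcaveOn_sin_Icc.secant_strict_mono (a := 0) ⟨le_rfl, pi_pos.le⟩ hx hy
      hx0.ne' hy0 hxy

end Real

theorem gCHSH_ratio_eq_sinc {k : ℝ} (hk0 : k ≠ 0) (hk1 : k ≠ 1) :
    k * cos (π / (2 * k)) / (k - 1) = π / 2 * sinc (π / 2 - π / (2 * k)) := by
  have hφ : π / 2 - π / (2 * k) = π * (k - 1) / (2 * k) := by field_simp
  have hk1' : k - 1 ≠ 0 := sub_ne_zero.mpr hk1
  rw [sinc_of_ne_zero (by rw [hφ]; exact div_ne_zero (by positivity) (by positivity)),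
    sin_pi_div_two_sub, hφ]
  field_simp

theorem gCHSH_ratio_strictAntiOn_Ioi_one :
    StrictAntiOn (fun k : ℝ => k * cos (π / (2 * k)) / (k - 1)) (Ioi 1) := by
  intro a (ha : 1 < a) b (hb : 1 < b) hab
  have hφ_mem {k : ℝ} (hk : 1 < k) : π / 2 - π / (2 * k) ∈ Icc 0 π := by
    constructor
    · rw [sub_nonneg]; gcongr; linarith
    · linarith [pi_pos, show 0 < π / (2 * k) by positivity]
  have hφ_lt : π / 2 - π / (2 * a) < π / 2 - π / (2 * b) := by gcongr
  simp only [gCHSH_ratio_eq_sinc (by positivity : a ≠ 0) ha.ne',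
    gCHSH_ratio_eq_sinc (by positivity : b ≠ 0) hb.ne']
  exact mul_lt_mul_of_pos_left (sinc_strictAntiOn (hφ_mem ha) (hφ_mem hb) hφ_lt) (by positivity)

theorem gCHSH_ratio_strictAnti :
    StrictAntiOn (fun k : ℝ => k * Real.cos (Real.pi / (2 * k)) / (k - 1))
      (Set.Ici (2 : ℝ)) :=
  gCHSH_ratio_strictAntiOn_Ioi_one.mono (Ici_subset_Ioi.mpr one_lt_two)
end

section
/- Let G ∈ [0,1] and F ∈ [0,1] with G² + F² = 1 (optimal weak measurement). For the (2,2,3)-star network built from the Vértesi ñ = 2 inequality with measurement vectors v¹ = (1,0,0), v² = (1/2,√3/2,0), v¹² = (1/2,−√3/2,0), w^s = v^s, structure matrix M with rows (1,1,1),(1,1,−1),(1,−1,0), and per-branch correlators ⟨A₁^x B₁^p⟩ = −G·(v^x · w^p) (first Alice, weak) and ⟨A₂^x B₂^p⟩ = −(v^x)ᵀ (F·I + ((1−F)/3)·T) w^p with T = (3/2)diag(1,1,0) (second Alice after one weak measurement), the quantities I^p = ∑_{x₁,x₂=1}^{3} M_{x₁ p} M_{x₂ p} ⟨A₁^{x₁}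 B₁^p⟩⟨A₂^{x₂} B₂^p⟩ satisfy |I¹| = |I²| = 2G(1+F) and |I³| = (1/2)G(1+F). Consequently S₁₂ = √|I¹| + √|I²| + √|I³| = (5√2/2)·√(G(1+F)). -/
open Matrix

/-- The Vértesi structure matrix for ñ = 2. -/
def Mver : Matrix (Fin 3) (Fin 3) ℝ := !![1, 1, 1; 1, 1, -1; 1, -1, 0]

/-- The measurement vectors v¹, v², v¹² (and w^s = v^s). -/
noncomputable def vVer : Fin 3 → Fin 3 → ℝ :=
  ![![1, 0, 0], ![1 / 2, Real.sqrt 3 / 2, 0], ![1 / 2, -Real.sqrt 3 / 2, 0]]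

/-- The measurement matrix T = (3/2)·diag(1,1,0). -/
noncomputable def Tmat : Matrix (Fin 3) (Fin 3) ℝ := (3 / 2 : ℝ) • Matrix.diagonal ![1, 1, 0]

/-- Correlator of the first (weakly measuring) Alice with Bob. -/
noncomputable def corr1 (G : ℝ) (x p : Fin 3) : ℝ := -G * (vVer x ⬝ᵥ vVer p)

/-- Correlator of the second Alice (after one weak measurement) with Bob. -/
noncomputable def corr2 (F : ℝ) (x p : Fin 3) : ℝ :=
  -(vVer x ⬝ᵥ ((F • (1 : Matrix (Fin 3) (Fin 3) ℝ) + ((1 - F) / 3) • Tmat).mulVec (vVer p)))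

/-- The network quantity I^p for the group (A₁₁, A₂₂, B). -/
noncomputable def Ip (G F : ℝ) (p : Fin 3) : ℝ :=
  ∑ x₁ : Fin 3, ∑ x₂ : Fin 3, Mver x₁ p * Mver x₂ p * corr1 G x₁ p * corr2 F x₂ p

lemma Ip_eq (G F : ℝ) :
    Ip G F 0 = 2 * G * (1 + F) ∧ Ip G F 1 = 2 * G * (1 + F) ∧ Ip G F 2 = 1 / 2 * G * (1 + F) := by
  have h3 : Real.sqrt 3 ^ 2 = 3 := Real.sq_sqrt (by norm_num)
  have h4 : Real.sqrt 3 ^ 4 = 9 := by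
    rw [show (4 : ℕ) = 2 * 2 from rfl, pow_mul, h3]; norm_num
  refine ⟨?_, ?_, ?_⟩ <;>
  · simp [Ip, corr1, corr2, Mver, vVer, Tmat, mulVec, dotProduct, Fin.sum_univ_succ,
      Matrix.one_apply, Matrix.diagonal]
    ring_nf
    try (simp only [h3, h4]; ring)

theorem vertesi_223_S12 (G F : ℝ) (hG : G ∈ Set.Icc (0 : ℝ) 1) (hF : F ∈ Set.Icc (0 : ℝ) 1)
    (hGF : G ^ 2 + F ^ 2 = 1) :
    |Ip G F 0| = 2 * G * (1 + F) ∧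
    |Ip G F 1| = 2 * G * (1 + F) ∧
    |Ip G F 2| = 1 / 2 * G * (1 + F) ∧
    Real.sqrt |Ip G F 0| + Real.sqrt |Ip G F 1| + Real.sqrt |Ip G F 2|
      = 5 * Real.sqrt 2 / 2 * Real.sqrt (G * (1 + F)) := by
  obtain ⟨h0, h1, h2⟩ := Ip_eq G F
  obtain ⟨hG0, hG1⟩ := hG
  obtain ⟨hF0, hF1⟩ := hF
  have hpos : 0 ≤ G * (1 + F) := mul_nonneg hG0 (by linarith)
  have e0 : |Ip G F 0| = 2 * G * (1 + F) := by rw [h0, abs_of_nonneg (by nlinarith)]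
  have e1 : |Ip G F 1| = 2 * G * (1 + F) := by rw [h1, abs_of_nonneg (by nlinarith)]
  have e2 : |Ip G F 2| = 1 / 2 * G * (1 + F) := by rw [h2, abs_of_nonneg (by nlinarith)]
  refine ⟨e0, e1, e2, ?_⟩
  have hs2 : Real.sqrt 2 ^ 2 = 2 := Real.sq_sqrt (by norm_num)
  have hhalf : Real.sqrt (1 / 2) = Real.sqrt 2 / 2 := by
    rw [show (1 / 2 : ℝ) = (Real.sqrt 2 / 2) ^ 2 by rw [div_pow, hs2]; norm_num]
    exact Real.sqrt_sq (by positivity)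
  rw [e0, e1, e2, show (2 : ℝ) * G * (1 + F) = 2 * (G * (1 + F)) by ring,
    show (1 / 2 : ℝ) * G * (1 + F) = 1 / 2 * (G * (1 + F)) by ring,
    Real.sqrt_mul (by norm_num : (0 : ℝ) ≤ 2), Real.sqrt_mul (by norm_num : (0 : ℝ) ≤ 1 / 2),
    hhalf]
  ring
end
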